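/- Let X be a finite-dimensional complex Banach space and T a nonzero nu-smooth operator. Then the numerical radius attainment set of T is M_{W(T)} = { (μx₀, conj(μ)x₀*) : |μ| = 1 } for some fixed pair (x₀, x₀*) with x₀ ∈ S_X and x₀* ∈ J(x₀). -/

import Mathlib

/-- The numerical radius of a bounded linear operator on a complex space. -/
noncomputable def nrad {X : Type*} [NormedAddCommGroup X] [NormedSpace ℂ X]
    (T : X →L[ℂ] X) : ℝ :=
  sSup {r : ℝ | ∃ (x : X) (f : X →L[ℂ] ℂ), ‖x‖ = 1 ∧ ‖f‖ = 1 ∧ f x = 1 ∧ r = ‖f (T x)‖}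

/-- The numerical radius attainment set of `T`. -/
noncomputable def MW {X : Type*} [NormedAddCommGroup X] [NormedSpace ℂ X]
    (T : X →L[ℂ] X) : Set (X × (X →L[ℂ] ℂ)) :=
  {p | ‖p.1‖ = 1 ∧ ‖p.2‖ = 1 ∧ p.2 p.1 = 1 ∧ ‖p.2 (T p.1)‖ = nrad T}

/-!
If `(x, f)` attains the numerical radius `ν(T) > 0` and `f (B x) = 0`, then `(x, f)` witnesses
`ν(T) ≤ ν(T + λB)` for every `λ`, so `T ⊥ B`. Given two attaining pairs `(x, f)`, `(y, g)` and any
`A`, the operators `A - (f (A x) / f (T x)) • T` and `(g (A y) / g (T y)) • T - A` are therefore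
orthogonal to `T`; by nu-smoothness so is their sum, a multiple `c • T`, and `T ⊥ c • T` forces
`c = 0` (take `λ = -c⁻¹`). So `A ↦ f (A x) / f (T x)` does not depend on the attaining pair, and
evaluating it on the rank-one operators `z ↦ h z • w` gives `(y, g) = (μ • x, conj μ • f)`.

Attaining pairs exist by compactness. That `ν(T) > 0` when `T ≠ 0` is Liouville's theorem: if
`ν(T) = 0` then `‖x‖ ≤ ‖(1 - λT) x‖` for all `x`, so `λ ↦ (1 - λT)⁻¹` is entire and bounded by `1`,
hence constant.
-/

open ContinuousLinearMap

section

variable {X : Type*} [NormedAddCommGroup X] [NormedSpace ℂ X]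

variable (X) in
def statePairs : Set (X × (X →L[ℂ] ℂ)) := {p | ‖p.1‖ = 1 ∧ ‖p.2‖ = 1 ∧ p.2 p.1 = 1}

/-- Birkhoff–James orthogonality `T ⊥ A` for the numerical radius. -/
def IsNradOrtho (T A : X →L[ℂ] X) : Prop := ∀ lam : ℂ, nrad T ≤ nrad (T + lam • A)

def IsNradSmooth (T : X →L[ℂ] X) : Prop :=
  ∀ A B, IsNradOrtho T A → IsNradOrtho T B → IsNradOrtho T (A + B)

section NumericalRadius

variable {T : X →L[ℂ] X} {x : X} {f : X →L[ℂ] ℂ}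

theorem norm_apply_le_nrad (T : X →L[ℂ] X) (hp : (x, f) ∈ statePairs X) :
    ‖f (T x)‖ ≤ nrad T := by
  refine le_csSup ⟨‖T‖, ?_⟩ ⟨x, f, hp.1, hp.2.1, hp.2.2, rfl⟩
  rintro _ ⟨y, g, hy, hg, -, rfl⟩
  calc ‖g (T y)‖ ≤ ‖g‖ * ‖T y‖ := g.le_opNorm _
    _ ≤ ‖T‖ := by simpa [hg, hy] using T.le_opNorm y

theorem nrad_nonneg (T : X →L[ℂ] X) : 0 ≤ nrad T :=
  Real.sSup_nonneg <| by rintro _ ⟨x, f, -, -, -, rfl⟩; positivity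

theorem nrad_zero : nrad (0 : X →L[ℂ] X) = 0 :=
  le_antisymm (Real.sSup_le (by rintro _ ⟨x, f, -, -, -, rfl⟩; simp) le_rfl) (nrad_nonneg 0)

theorem statePairs_nonempty [Nontrivial X] : (statePairs X).Nonempty := by
  obtain ⟨x, hx⟩ := exists_norm_eq X zero_le_one
  obtain ⟨f, hf, hfx⟩ := exists_dual_vector ℂ x (by simp [hx])
  exact ⟨(x, f), hx, hf, by simp [hfx, hx]⟩

theorem isCompact_statePairs [FiniteDimensional ℂ X] : IsCompact (statePairs X) := by
  refine Metric.isCompact_of_isClosed_isBounded ?_ ?_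
  · refine (isClosed_eq (by fun_prop) continuous_const).inter <|
      (isClosed_eq (by fun_prop) continuous_const).inter (isClosed_eq ?_ continuous_const)
    exact continuous_snd.clm_apply continuous_fst
  · refine (Metric.isBounded_closedBall (x := 0) (r := 1)).subset ?_
    rintro p ⟨h1, h2, -⟩
    simp [Prod.norm_def, h1, h2]

theorem nonempty_MW [FiniteDimensional ℂ X] [Nontrivial X] (T : X →L[ℂ] X) :
    (MW T).Nonempty := by
  have hcont : Continuous fun p : X × (X →L[ℂ] ℂ) => ‖p.2 (T p.1)‖ :=
    (continuous_snd.clm_apply (T.continuous.comp continuous_fst)).norm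
  obtain ⟨p, hp, hmax⟩ :=
    isCompact_statePairs.exists_isMaxOn statePairs_nonempty hcont.continuousOn
  refine ⟨p, hp.1, hp.2.1, hp.2.2, le_antisymm (norm_apply_le_nrad T hp) ?_⟩
  refine Real.sSup_le ?_ (norm_nonneg _)
  rintro _ ⟨x, f, hx, hf, hfx, rfl⟩
  exact isMaxOn_iff.mp hmax (x, f) ⟨hx, hf, hfx⟩

theorem smul_mem_MW (hp : (x, f) ∈ MW T) {μ : ℂ} (hμ : ‖μ‖ = 1) :
    (μ • x, starRingEnd ℂ μ • f) ∈ MW T := by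
  have hμμ : μ * starRingEnd ℂ μ = 1 := by simp [Complex.mul_conj', hμ]
  obtain ⟨hx, hf, hfx, hfT⟩ := hp
  refine ⟨?_, ?_, ?_, ?_⟩ <;> simp only [norm_smul, RCLike.norm_conj, smul_apply, map_smul,
    smul_eq_mul, hμ, hx, hf, hfx, hfT, one_mul, mul_one, ← mul_assoc, hμμ]

end NumericalRadius

section Liouville

variable {T : X →L[ℂ] X}

theorem norm_le_norm_add_smul_apply_of_nrad_eq_zero (h : nrad T = 0) (x : X) (lam : ℂ) :
    ‖x‖ ≤ ‖x + lam • T x‖ := by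
  rcases eq_or_ne x 0 with rfl | hx
  · simp
  obtain ⟨f, hf, hfx⟩ := exists_dual_vector ℂ x (norm_ne_zero_iff.mpr hx)
  have hu : ((‖x‖⁻¹ : ℂ) • x, f) ∈ statePairs X := by
    refine ⟨?_, hf, ?_⟩
    · simp [norm_smul, hx]
    · simp [hfx, hx]
  have hfTx : f (T x) = 0 := by
    have := norm_apply_le_nrad T hu
    simp only [map_smul, smul_eq_mul, norm_mul, norm_inv, Complex.norm_real, norm_norm, h] at this
    exact norm_le_zero_iff.mp (nonpos_of_mul_nonpos_right this (by positivity))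
  calc ‖x‖ = ‖f (x + lam • T x)‖ := by simp [hfx, hfTx]
    _ ≤ ‖f‖ * ‖x + lam • T x‖ := f.le_opNorm _
    _ = ‖x + lam • T x‖ := by rw [hf, one_mul]

theorem norm_inverse_le_one {A : X →L[ℂ] X} (hA : IsUnit A) (h : ∀ x, ‖x‖ ≤ ‖A x‖) :
    ‖Ring.inverse A‖ ≤ 1 := by
  refine opNorm_le_bound _ zero_le_one fun y => ?_
  calc ‖Ring.inverse A y‖ ≤ ‖A (Ring.inverse A y)‖ := h _
    _ = 1 * ‖y‖ := by
      simpa using congrArg (fun B : X →L[ℂ] X => ‖B y‖) (Ring.mul_inverse_cancel A hA)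

theorem isUnit_of_forall_norm_le_norm_apply [FiniteDimensional ℂ X] {A : X →L[ℂ] X}
    (h : ∀ x, ‖x‖ ≤ ‖A x‖) : IsUnit A := by
  have hinj : Function.Injective A := by
    refine (injective_iff_map_eq_zero A).mpr fun x hx => norm_le_zero_iff.mp ?_
    simpa [hx] using h x
  exact isUnit_iff_bijective.mpr
    ⟨hinj, LinearMap.injective_iff_surjective (f := (A : X →ₗ[ℂ] X)).mp hinj⟩

theorem eq_zero_of_nrad_eq_zero [FiniteDimensional ℂ X] (h : nrad T = 0) : T = 0 := by
  have hbound : ∀ lam : ℂ, ∀ x, ‖x‖ ≤ ‖(1 - lam • T) x‖ := fun lam x => by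
    simpa [sub_eq_add_neg] using norm_le_norm_add_smul_apply_of_nrad_eq_zero h x (-lam)
  have hunit (lam : ℂ) : IsUnit (1 - lam • T) := isUnit_of_forall_norm_le_norm_apply (hbound lam)
  set F : ℂ → (X →L[ℂ] X) := fun lam => Ring.inverse (1 - lam • T)
  have hF : Differentiable ℂ F := fun lam =>
    ((differentiableAt_const 1).sub (differentiableAt_id.smul_const T)).inverse (hunit lam)
  have hF_bdd : Bornology.IsBounded (Set.range F) := by
    refine (Metric.isBounded_closedBall (x := 0) (r := 1)).subset ?_
    rintro _ ⟨lam, rfl⟩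
    simpa using norm_inverse_le_one (hunit lam) (hbound lam)
  have hF1 : Ring.inverse (1 - T) = 1 := by
    simpa [F] using hF.apply_eq_apply_of_bounded hF_bdd 1 0
  have := Ring.mul_inverse_cancel _ (by simpa using hunit 1)
  rw [hF1, mul_one] at this
  exact sub_eq_self.mp this

theorem nrad_pos [FiniteDimensional ℂ X] (hT : T ≠ 0) : 0 < nrad T :=
  (nrad_nonneg T).lt_of_ne' (mt eq_zero_of_nrad_eq_zero hT)

end Liouville

section Smoothness

variable {T : X →L[ℂ] X} {x y : X} {f g : X →L[ℂ] ℂ}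

theorem apply_ne_zero_of_mem_MW (hT : 0 < nrad T) (hp : (x, f) ∈ MW T) : f (T x) ≠ 0 :=
  norm_ne_zero_iff.mp (hp.2.2.2 ▸ hT.ne')

theorem isNradOrtho_of_mem_MW (hp : (x, f) ∈ MW T) {B : X →L[ℂ] X} (hB : f (B x) = 0) :
    IsNradOrtho T B := fun lam =>
  calc nrad T = ‖f ((T + lam • B) x)‖ := by simp [hB, hp.2.2.2]
    _ ≤ nrad (T + lam • B) := norm_apply_le_nrad _ ⟨hp.1, hp.2.1, hp.2.2.1⟩

theorem not_isNradOrtho_smul_self (hT : 0 < nrad T) {c : ℂ} (hc : c ≠ 0) :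
    ¬ IsNradOrtho T (c • T) := fun h => by
  have := h (-c⁻¹)
  rw [smul_smul, neg_mul, inv_mul_cancel₀ hc, neg_one_smul, add_neg_cancel, nrad_zero] at this
  exact this.not_gt hT

theorem IsNradSmooth.apply_div_apply_eq (hsmooth : IsNradSmooth T) (hT : 0 < nrad T)
    (hp : (x, f) ∈ MW T) (hq : (y, g) ∈ MW T) (A : X →L[ℂ] X) :
    f (A x) / f (T x) = g (A y) / g (T y) := by
  have hfT := apply_ne_zero_of_mem_MW hT hp
  have hgT := apply_ne_zero_of_mem_MW hT hq
  set c₁ := f (A x) / f (T x)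
  set c₂ := g (A y) / g (T y)
  have h₁ : IsNradOrtho T (A - c₁ • T) := isNradOrtho_of_mem_MW hp <| by
    simp [c₁, hfT]
  have h₂ : IsNradOrtho T (c₂ • T - A) := isNradOrtho_of_mem_MW hq <| by
    simp [c₂, hgT]
  have h₁₂ := hsmooth _ _ h₁ h₂
  rw [show A - c₁ • T + (c₂ • T - A) = (c₂ - c₁) • T by module] at h₁₂
  by_contra hne
  exact not_isNradOrtho_smul_self hT (sub_ne_zero.mpr (Ne.symm hne)) h₁₂

end Smoothness

theorem exists_smul_eq_of_forall_apply_div_eq {x y : X} {f g : X →L[ℂ] ℂ} {s t : ℂ}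
    (hx : ‖x‖ = 1) (hy : ‖y‖ = 1) (hfx : f x = 1) (hgy : g y = 1) (ht : t ≠ 0) (hs : s ≠ 0)
    (h : ∀ A : X →L[ℂ] X, f (A x) / t = g (A y) / s) :
    ∃ μ : ℂ, ‖μ‖ = 1 ∧ (y, g) = (μ • x, starRingEnd ℂ μ • f) := by
  have hyx (k : X →L[ℂ] ℂ) : k y = s * f y / t * k x := by
    have := h (k.smulRight y)
    simp only [smulRight_apply, map_smul, smul_eq_mul, hgy, mul_one] at this
    field_simp at this ⊢
    linear_combination -this
  have hy_eq : y = (s * f y / t) • x :=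
    (SeparatingDual.eq_iff_forall_dual_eq (R := ℂ)).mpr fun k => by
      rw [map_smul, smul_eq_mul, hyx k]
  have hfy : f y ≠ 0 := fun h0 => by
    rw [h0, mul_zero, zero_div, zero_smul] at hy_eq
    simp [hy_eq] at hy
  have hst : s = t := by
    have := hyx f
    rw [hfx, mul_one] at this
    field_simp at this
    exact this.symm
  set μ := f y
  have hyμ : y = μ • x := by rwa [hst, mul_div_cancel_left₀ _ ht] at hy_eq
  have hμ : ‖μ‖ = 1 := by rwa [hyμ, norm_smul, hx, mul_one] at hy
  have hfg (w : X) : f w = μ * g w := by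
    have := h (f.smulRight w)
    simp only [smulRight_apply, map_smul, smul_eq_mul, hfx, one_mul, hst] at this
    exact (div_left_inj' ht).mp this
  refine ⟨μ, hμ, Prod.ext hyμ (ext fun w => ?_)⟩
  have hμμ : starRingEnd ℂ μ * μ = 1 := by simp [Complex.conj_mul', hμ]
  simp [hfg w, ← mul_assoc, hμμ]

end

/-- on a finite-dimensional complex Banach space, if `T` is nonzero and
nu-smooth, then `M_{W(T)} = { (μx₀, conj(μ)x₀*) : |μ| = 1 }` for some fixed pair
`(x₀, x₀*)` with `x₀ ∈ S_X` and `x₀* ∈ J(x₀)`. -/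
theorem single_attainment_of_nu_smooth (X : Type*) [NormedAddCommGroup X]
    [NormedSpace ℂ X] [FiniteDimensional ℂ X] (T : X →L[ℂ] X) (hT : T ≠ 0)
    (hsmooth : ∀ A B : X →L[ℂ] X, (∀ lam : ℂ, nrad T ≤ nrad (T + lam • A)) →
      (∀ lam : ℂ, nrad T ≤ nrad (T + lam • B)) →
      (∀ lam : ℂ, nrad T ≤ nrad (T + lam • (A + B)))) :
    ∃ (x₀ : X) (f₀ : X →L[ℂ] ℂ), ‖x₀‖ = 1 ∧ ‖f₀‖ = 1 ∧ f₀ x₀ = 1 ∧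
      MW T = {p | ∃ μ : ℂ, ‖μ‖ = 1 ∧ p = (μ • x₀, (starRingEnd ℂ) μ • f₀)} := by
  obtain ⟨v, hv⟩ : ∃ v, T v ≠ 0 := by
    by_contra! h
    exact hT (ext h)
  have : Nontrivial X := ⟨⟨T v, 0, hv⟩⟩
  have hν := nrad_pos hT
  obtain ⟨⟨x₀, f₀⟩, hp⟩ := nonempty_MW T
  refine ⟨x₀, f₀, hp.1, hp.2.1, hp.2.2.1, Set.ext fun ⟨y, g⟩ => ⟨fun hq => ?_, ?_⟩⟩
  · exact exists_smul_eq_of_forall_apply_div_eq hp.1 hq.1 hp.2.2.1 hq.2.2.1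
      (apply_ne_zero_of_mem_MW hν hp) (apply_ne_zero_of_mem_MW hν hq)
      (IsNradSmooth.apply_div_apply_eq hsmooth hν hp hq)
  · rintro ⟨μ, hμ, hμp⟩
    exact hμp ▸ smul_mem_MW hp hμ
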